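/- arXiv:2106.12761 — 2 statements merged into one kernel-verified Lean document; each statement's English description precedes it below -/
import Mathlib

section
/- Let v₁, v₂ ∈ SVL[1,∞), θ ∈ [1,∞), γ₁', γ₂' > 0. Then there is C > 0 such that for all n ∈ ℕ, ∑_{0 ≤ s₂ < n/γ₂'} v₂(2^{s₂})^θ · v₁(2^{(n - s₂γ₂')/γ₁'})^θ ≤ C · v₁(2^{n/γ₁'})^θ · v₂(2^{n/γ₂'})^θ · (n+1). -/
set_option maxHeartbeats 1600000
set_option linter.unusedTactic false
set_option linter.unreachableTactic false
set_option linter.unnecessarySeqFocus false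

open Real Finset

/-- `SVL[1,∞)`: positive measurable functions `v` on `[1,∞)` such that for every `ε > 0`,
`v(t) t^(-ε)` is almost decreasing and `v(t) (log₂ (2t))^ε` is increasing on `[1,∞)`. -/
def SVL (v : ℝ → ℝ) : Prop :=
  Measurable v ∧ (∀ t ≥ (1:ℝ), 0 < v t) ∧
  (∀ ε > (0:ℝ), ∃ C > (0:ℝ), ∀ t u : ℝ, 1 ≤ u → u ≤ t →
    v t * t ^ (-ε) ≤ C * (v u * u ^ (-ε))) ∧
  (∀ ε > (0:ℝ), MonotoneOn (fun t => v t * (Real.logb 2 (2 * t)) ^ ε) (Set.Ici 1))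

lemma sum_inv_sqrt_le (m : ℕ) :
    ∑ j ∈ Finset.range m, 1 / Real.sqrt ((j:ℝ) + 1) ≤ 2 * Real.sqrt m := by
  induction m with
  | zero => simp
  | succ m ih =>
    rw [Finset.sum_range_succ]
    have h1 : 1 / Real.sqrt ((m:ℝ) + 1) ≤ 2 * Real.sqrt ((m:ℝ)+1) - 2 * Real.sqrt m := by
      have hm : (0:ℝ) ≤ m := Nat.cast_nonneg m
      have hs1 : Real.sqrt ((m:ℝ)+1) > 0 := Real.sqrt_pos.2 (by linarith)
      have hsq : Real.sqrt ((m:ℝ)) * Real.sqrt ((m:ℝ)+1) ≤ (m:ℝ) + 1/2 := by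
        rw [← Real.sqrt_mul hm]
        have : Real.sqrt ((m:ℝ) * ((m:ℝ)+1)) ≤ Real.sqrt (((m:ℝ)+1/2)^2) := by
          apply Real.sqrt_le_sqrt; nlinarith
        rwa [Real.sqrt_sq (by linarith)] at this
      have h2 : Real.sqrt ((m:ℝ)+1) * Real.sqrt ((m:ℝ)+1) = (m:ℝ)+1 :=
        Real.mul_self_sqrt (by linarith)
      rw [div_le_iff₀ hs1]
      nlinarith
    push_cast
    linarith

lemma split_bound {a b c n : ℝ} (ha : 1 ≤ a) (hb : 1 ≤ b) (hc : 0 < c) (hn : 0 ≤ n)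
    (h : c * (n+1) ≤ max a b) :
    1/(Real.sqrt a * Real.sqrt b) ≤
      (1/(Real.sqrt c * Real.sqrt (n+1))) * (1/Real.sqrt a + 1/Real.sqrt b) := by
  have ha0 : (0:ℝ) < a := by linarith
  have hb0 : (0:ℝ) < b := by linarith
  have hsa : 0 < Real.sqrt a := Real.sqrt_pos.2 ha0
  have hsb : 0 < Real.sqrt b := Real.sqrt_pos.2 hb0
  have hsc : 0 < Real.sqrt c * Real.sqrt (n+1) := by
    apply mul_pos (Real.sqrt_pos.2 hc) (Real.sqrt_pos.2 (by linarith))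
  have hscn : Real.sqrt c * Real.sqrt (n+1) = Real.sqrt (c*(n+1)) :=
    (Real.sqrt_mul hc.le _).symm
  rcases le_total a b with hab | hab
  · have hbc : c*(n+1) ≤ b := by rw [max_eq_right hab] at h; exact h
    have : Real.sqrt (c*(n+1)) ≤ Real.sqrt b := Real.sqrt_le_sqrt hbc
    calc 1/(Real.sqrt a * Real.sqrt b) ≤ 1/(Real.sqrt a * (Real.sqrt c * Real.sqrt (n+1))) := by
          apply one_div_le_one_div_of_le (by positivity)
          rw [hscn]; exact mul_le_mul_of_nonneg_left this hsa.le
      _ = (1/(Real.sqrt c * Real.sqrt (n+1))) * (1/Real.sqrt a) := by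
          field_simp <;> ring
      _ ≤ _ := by
          apply mul_le_mul_of_nonneg_left _ (by positivity)
          have : 0 < 1/Real.sqrt b := by positivity
          linarith
  · have hbc : c*(n+1) ≤ a := by rw [max_eq_left hab] at h; exact h
    have : Real.sqrt (c*(n+1)) ≤ Real.sqrt a := Real.sqrt_le_sqrt hbc
    calc 1/(Real.sqrt a * Real.sqrt b) ≤ 1/((Real.sqrt c * Real.sqrt (n+1)) * Real.sqrt b) := by
          apply one_div_le_one_div_of_le (by positivity)
          rw [hscn]; exact mul_le_mul_of_nonneg_right this hsb.le
      _ = (1/(Real.sqrt c * Real.sqrt (n+1))) * (1/Real.sqrt b) := by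
          field_simp <;> ring
      _ ≤ _ := by
          apply mul_le_mul_of_nonneg_left _ (by positivity)
          have : 0 < 1/Real.sqrt a := by positivity
          linarith

lemma svl_mono (v : ℝ → ℝ) (hv : SVL v) {ε s N : ℝ} (hε : 0 < ε) (hs : 0 ≤ s) (hsN : s ≤ N) :
    v ((2:ℝ) ^ s) * (1 + s) ^ ε ≤ v ((2:ℝ) ^ N) * (1 + N) ^ ε := by
  have hmono := hv.2.2.2 ε hε
  have hu : (1:ℝ) ≤ (2:ℝ) ^ s := Real.one_le_rpow (by norm_num) hs
  have ht : (1:ℝ) ≤ (2:ℝ) ^ N := Real.one_le_rpow (by norm_num) (hs.trans hsN)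
  have hle : (2:ℝ) ^ s ≤ (2:ℝ) ^ N := by
    exact (Real.rpow_le_rpow_left_iff (by norm_num)).2 hsN
  have key := hmono (Set.mem_Ici.2 hu) (Set.mem_Ici.2 ht) hle
  simp only at key
  have e1 : Real.logb 2 (2 * (2:ℝ) ^ s) = 1 + s := by
    rw [show (2:ℝ) * (2:ℝ) ^ s = (2:ℝ) ^ (1 + s) by
      rw [Real.rpow_add (by norm_num), Real.rpow_one]]
    exact Real.logb_rpow (by norm_num) (by norm_num)
  have e2 : Real.logb 2 (2 * (2:ℝ) ^ N) = 1 + N := by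
    rw [show (2:ℝ) * (2:ℝ) ^ N = (2:ℝ) ^ (1 + N) by
      rw [Real.rpow_add (by norm_num), Real.rpow_one]]
    exact Real.logb_rpow (by norm_num) (by norm_num)
  rwa [e1, e2] at key

lemma svl_pow (v : ℝ → ℝ) (hv : SVL v) {θ s N : ℝ} (hθ : 1 ≤ θ) (hs : 0 ≤ s) (hsN : s ≤ N) :
    (v ((2:ℝ) ^ s)) ^ θ ≤ (v ((2:ℝ) ^ N)) ^ θ * (Real.sqrt (1 + N) / Real.sqrt (1 + s)) := by
  have hθ0 : (0:ℝ) < θ := by linarith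
  set ε : ℝ := 1 / (2 * θ) with hε_def
  have hε : 0 < ε := by positivity
  have h := svl_mono v hv hε hs hsN
  have hvs : 0 < v ((2:ℝ) ^ s) := hv.2.1 _ (Real.one_le_rpow (by norm_num) hs)
  have hvN : 0 < v ((2:ℝ) ^ N) := hv.2.1 _ (Real.one_le_rpow (by norm_num) (hs.trans hsN))
  have h1s : (0:ℝ) < 1 + s := by linarith
  have h1N : (0:ℝ) < 1 + N := by linarith
  -- v(2^s) ≤ v(2^N) * ((1+N)/(1+s))^ε
  have h2 : v ((2:ℝ) ^ s) ≤ v ((2:ℝ) ^ N) * ((1 + N) / (1 + s)) ^ ε := by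
    rw [Real.div_rpow (by positivity) (by positivity), ← mul_div_assoc,
      le_div_iff₀ (by positivity)]
    exact h
  calc (v ((2:ℝ) ^ s)) ^ θ ≤ (v ((2:ℝ) ^ N) * ((1 + N) / (1 + s)) ^ ε) ^ θ :=
        Real.rpow_le_rpow hvs.le h2 hθ0.le
    _ = (v ((2:ℝ) ^ N)) ^ θ * (Real.sqrt (1 + N) / Real.sqrt (1 + s)) := by
        rw [Real.mul_rpow hvN.le (by positivity),
          ← Real.rpow_mul (by positivity)]
        congr 1
        have : ε * θ = 1 / 2 := by
          field_simp [hε_def]; rw [hε_def]; field_simp [hθ0.ne']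
        rw [this, Real.div_rpow h1N.le h1s.le, Real.sqrt_eq_rpow, Real.sqrt_eq_rpow]

/-- For `v₁, v₂ ∈ SVL[1,∞)`, `θ ∈ [1,∞)`, `γ₁', γ₂' > 0`, there is `C > 0` such that
for all `n`, `∑_{0 ≤ s₂ < n/γ₂'} v₂(2^{s₂})^θ v₁(2^{(n-s₂γ₂')/γ₁'})^θ
  ≤ C v₁(2^{n/γ₁'})^θ v₂(2^{n/γ₂'})^θ (n+1)`. -/
theorem stmt5 (v₁ v₂ : ℝ → ℝ) (h₁ : SVL v₁) (h₂ : SVL v₂)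
    (θ γ₁' γ₂' : ℝ) (hθ : 1 ≤ θ) (hγ₁' : 0 < γ₁') (hγ₂' : 0 < γ₂') :
    ∃ C > (0:ℝ), ∀ n : ℕ,
      ∑ s₂ ∈ Finset.range ⌈(n:ℝ) / γ₂'⌉₊,
          (v₂ ((2:ℝ) ^ (s₂:ℝ))) ^ θ * (v₁ ((2:ℝ) ^ (((n:ℝ) - s₂ * γ₂') / γ₁'))) ^ θ
        ≤ C * (v₁ ((2:ℝ) ^ ((n:ℝ) / γ₁'))) ^ θ * (v₂ ((2:ℝ) ^ ((n:ℝ) / γ₂'))) ^ θ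
            * ((n:ℝ) + 1) := by
  obtain ⟨M, hM, hγ₁M, hγ₂M⟩ : ∃ M : ℝ, 0 < M ∧ γ₁' ≤ M ∧ γ₂' ≤ M :=
    ⟨max γ₁' γ₂', lt_max_of_lt_left hγ₁', le_max_left _ _, le_max_right _ _⟩
  obtain ⟨c, hc, hc1, hc2⟩ : ∃ c : ℝ, 0 < c ∧ c ≤ 1 ∧ c * (2*M) ≤ 1 := by
    refine ⟨min 1 (1/(2*M)), lt_min one_pos (by positivity), min_le_left _ _, ?_⟩
    calc min 1 (1/(2*M)) * (2*M) ≤ (1/(2*M)) * (2*M) :=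
          mul_le_mul_of_nonneg_right (min_le_right _ _) (by positivity)
      _ = 1 := by field_simp
  obtain ⟨c₂, hc₂, hc₂1, hc₂2⟩ : ∃ c₂ : ℝ, 0 < c₂ ∧ c₂ ≤ 1 ∧ c₂ * γ₁' ≤ γ₂' := by
    refine ⟨min 1 (γ₂'/γ₁'), lt_min one_pos (by positivity), min_le_left _ _, ?_⟩
    calc min 1 (γ₂'/γ₁') * γ₁' ≤ (γ₂'/γ₁') * γ₁' :=
          mul_le_mul_of_nonneg_right (min_le_right _ _) hγ₁'.le
      _ = γ₂' := by field_simp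
  set K : ℝ := (1 + 1/γ₁') * (1 + 1/γ₂') with hK_def
  have hK : 0 < K := by positivity
  set K₂ : ℝ := 1/γ₂' + 1 with hK₂_def
  have hK₂ : 0 < K₂ := by positivity
  refine ⟨Real.sqrt K * ((1 + 1/Real.sqrt c₂) * (2 * Real.sqrt K₂)) / Real.sqrt c, by
    have := Real.sqrt_pos.2 hK
    have := Real.sqrt_pos.2 hK₂
    have := Real.sqrt_pos.2 hc
    have := Real.sqrt_pos.2 hc₂
    positivity, ?_⟩
  intro n
  set N₁ : ℝ := (n:ℝ)/γ₁' with hN₁_def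
  set N₂ : ℝ := (n:ℝ)/γ₂' with hN₂_def
  have hN₁0 : 0 ≤ N₁ := by positivity
  have hN₂0 : 0 ≤ N₂ := by positivity
  set m : ℕ := ⌈N₂⌉₊ with hm_def
  set V : ℝ := (v₁ ((2:ℝ) ^ N₁)) ^ θ * (v₂ ((2:ℝ) ^ N₂)) ^ θ with hV_def
  have hv₁N : 0 < v₁ ((2:ℝ) ^ N₁) := h₁.2.1 _ (Real.one_le_rpow (by norm_num) hN₁0)
  have hv₂N : 0 < v₂ ((2:ℝ) ^ N₂) := h₂.2.1 _ (Real.one_le_rpow (by norm_num) hN₂0)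
  have hV : 0 < V :=
    mul_pos (Real.rpow_pos_of_pos hv₁N θ) (Real.rpow_pos_of_pos hv₂N θ)
  set e : ℕ → ℝ := fun s₂ => ((n:ℝ) - s₂ * γ₂') / γ₁' with he_def
  set A : ℝ := Real.sqrt (1 + N₂) * Real.sqrt (1 + N₁) with hA_def
  have hA0 : 0 ≤ A := by positivity
  set D : ℝ := 1/(Real.sqrt c * Real.sqrt ((n:ℝ)+1)) with hD_def
  have hD0 : 0 ≤ D := by positivity
  have hn0 : (0:ℝ) ≤ (n:ℝ) := Nat.cast_nonneg n
  -- definitional facts, extracted before we forget the definitions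
  have he_eq : ∀ s₂ : ℕ, e s₂ = ((n:ℝ) - s₂ * γ₂') / γ₁' := fun _ => rfl
  have hlt_all : ∀ s₂ : ℕ, s₂ < m → (s₂:ℝ) < N₂ := fun s₂ hs₂ => Nat.lt_ceil.1 hs₂
  have hm_ub : (m:ℝ) < N₂ + 1 := by
    rw [hm_def]; exact_mod_cast Nat.ceil_lt_add_one hN₂0
  have hN₂mul : N₂ * γ₂' = n := by rw [hN₂_def]; field_simp
  have hN₁mul : N₁ * γ₁' = n := by rw [hN₁_def]; field_simp
  have hN₁le : 1 + N₁ ≤ (1+1/γ₁') * ((n:ℝ)+1) := by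
    have h1 : N₁ ≤ (1/γ₁') * ((n:ℝ)+1) := by
      rw [hN₁_def, one_div, ← div_eq_inv_mul]
      gcongr
      linarith
    nlinarith
  have hN₂le : 1 + N₂ ≤ (1+1/γ₂') * ((n:ℝ)+1) := by
    have h1 : N₂ ≤ (1/γ₂') * ((n:ℝ)+1) := by
      rw [hN₂_def, one_div, ← div_eq_inv_mul]
      gcongr
      linarith
    nlinarith
  have hN₂le1 : N₂ ≤ (1/γ₂') * ((n:ℝ)+1) := by
    rw [hN₂_def, one_div, ← div_eq_inv_mul]
    gcongr
    linarith
  clear_value D A e V m N₂ N₁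
  clear hm_def he_def hN₁_def hN₂_def
  have he_facts : ∀ s₂ : ℕ, s₂ ∈ Finset.range m → 0 ≤ e s₂ ∧ e s₂ ≤ N₁ ∧
      (s₂:ℝ) * γ₂' + e s₂ * γ₁' = n := by
    intro s₂ hs₂
    have hlt : (s₂:ℝ) < N₂ := hlt_all s₂ (Finset.mem_range.1 hs₂)
    have h1 : (s₂:ℝ) * γ₂' < n := by
      have := mul_lt_mul_of_pos_right hlt hγ₂'
      rwa [hN₂mul] at this
    rw [he_eq s₂]
    refine ⟨div_nonneg (by linarith) hγ₁'.le, ?_, ?_⟩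
    · rw [div_le_iff₀ hγ₁']
      nlinarith [mul_nonneg (Nat.cast_nonneg s₂ : (0:ℝ) ≤ (s₂:ℝ)) hγ₂'.le]
    · rw [div_mul_cancel₀ _ hγ₁'.ne']
      ring
  -- termwise bound
  have hterm : ∀ s₂ ∈ Finset.range m,
      (v₂ ((2:ℝ) ^ (s₂:ℝ))) ^ θ * (v₁ ((2:ℝ) ^ (((n:ℝ) - s₂ * γ₂') / γ₁'))) ^ θ
        ≤ V * A * (D * (1/Real.sqrt (1+(s₂:ℝ)) + 1/Real.sqrt (1+e s₂))) := by
    intro s₂ hs₂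
    obtain ⟨he0, heN₁, hesum⟩ := he_facts s₂ hs₂
    have hlt : (s₂:ℝ) < N₂ := hlt_all s₂ (Finset.mem_range.1 hs₂)
    have hs0 : (0:ℝ) ≤ (s₂:ℝ) := Nat.cast_nonneg s₂
    have hb2 := svl_pow v₂ h₂ hθ hs0 hlt.le
    have hb1 := svl_pow v₁ h₁ hθ he0 heN₁
    have hv₁e : 0 < v₁ ((2:ℝ) ^ (e s₂)) := h₁.2.1 _ (Real.one_le_rpow (by norm_num) he0)
    have hss : 0 < Real.sqrt (1+(s₂:ℝ)) := Real.sqrt_pos.2 (by linarith)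
    have hse : 0 < Real.sqrt (1+e s₂) := Real.sqrt_pos.2 (by linarith)
    have hmul : (v₂ ((2:ℝ) ^ (s₂:ℝ))) ^ θ * (v₁ ((2:ℝ) ^ (e s₂))) ^ θ ≤
        ((v₂ ((2:ℝ) ^ N₂)) ^ θ * (Real.sqrt (1+N₂)/Real.sqrt (1+(s₂:ℝ)))) *
          ((v₁ ((2:ℝ) ^ N₁)) ^ θ * (Real.sqrt (1+N₁)/Real.sqrt (1+e s₂))) := by
      apply mul_le_mul hb2 hb1 (Real.rpow_nonneg hv₁e.le θ)
      have := Real.rpow_nonneg hv₂N.le θ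
      positivity
    have heq : ((v₂ ((2:ℝ) ^ N₂)) ^ θ * (Real.sqrt (1+N₂)/Real.sqrt (1+(s₂:ℝ)))) *
          ((v₁ ((2:ℝ) ^ N₁)) ^ θ * (Real.sqrt (1+N₁)/Real.sqrt (1+e s₂)))
        = V * A * (1/(Real.sqrt (1+(s₂:ℝ)) * Real.sqrt (1+e s₂))) := by
      rw [hV_def, hA_def]
      field_simp
    have hmax : c * ((n:ℝ)+1) ≤ max (1+(s₂:ℝ)) (1+e s₂) := by
      rcases le_total (s₂:ℝ) (e s₂) with hcase | hcase
      · apply le_max_of_le_right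
        have h2eM : (n:ℝ) ≤ e s₂ * (2*M) := by nlinarith
        have hcn : c * (n:ℝ) ≤ e s₂ := by
          calc c * (n:ℝ) ≤ c * (e s₂ * (2*M)) := mul_le_mul_of_nonneg_left h2eM hc.le
            _ = e s₂ * (c * (2*M)) := by ring
            _ ≤ e s₂ * 1 := mul_le_mul_of_nonneg_left hc2 he0
            _ = e s₂ := mul_one _
        linarith
      · apply le_max_of_le_left
        have h2sM : (n:ℝ) ≤ (s₂:ℝ) * (2*M) := by nlinarith
        have hcn : c * (n:ℝ) ≤ (s₂:ℝ) := by
          calc c * (n:ℝ) ≤ c * ((s₂:ℝ) * (2*M)) := mul_le_mul_of_nonneg_left h2sM hc.le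
            _ = (s₂:ℝ) * (c * (2*M)) := by ring
            _ ≤ (s₂:ℝ) * 1 := mul_le_mul_of_nonneg_left hc2 hs0
            _ = (s₂:ℝ) := mul_one _
        linarith
    have hsplit := split_bound (by linarith : (1:ℝ) ≤ 1 + (s₂:ℝ))
      (by linarith : (1:ℝ) ≤ 1 + e s₂) hc hn0 hmax
    calc (v₂ ((2:ℝ) ^ (s₂:ℝ))) ^ θ * (v₁ ((2:ℝ) ^ (((n:ℝ) - s₂ * γ₂') / γ₁'))) ^ θ
        = (v₂ ((2:ℝ) ^ (s₂:ℝ))) ^ θ * (v₁ ((2:ℝ) ^ (e s₂))) ^ θ := by rw [he_eq s₂]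
      _ ≤ V * A * (1/(Real.sqrt (1+(s₂:ℝ)) * Real.sqrt (1+e s₂))) := heq ▸ hmul
      _ ≤ V * A * (D * (1/Real.sqrt (1+(s₂:ℝ)) + 1/Real.sqrt (1+e s₂))) := by
          apply mul_le_mul_of_nonneg_left _ (mul_nonneg hV.le hA0)
          rw [hD_def]
          exact hsplit
  -- sum bounds
  have hs1 : ∑ s₂ ∈ Finset.range m, 1/Real.sqrt (1+(s₂:ℝ)) ≤ 2 * Real.sqrt m := by
    calc ∑ s₂ ∈ Finset.range m, 1/Real.sqrt (1+(s₂:ℝ))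
        = ∑ s₂ ∈ Finset.range m, 1/Real.sqrt ((s₂:ℝ)+1) :=
          Finset.sum_congr rfl (fun _ _ => by rw [add_comm])
      _ ≤ 2 * Real.sqrt m := sum_inv_sqrt_le m
  have hs2 : ∑ s₂ ∈ Finset.range m, 1/Real.sqrt (1+e s₂)
      ≤ (1/Real.sqrt c₂) * (2 * Real.sqrt m) := by
    have hper : ∀ s₂ ∈ Finset.range m, 1/Real.sqrt (1+e s₂)
        ≤ (1/Real.sqrt c₂) * (1/Real.sqrt (((m-1-s₂ : ℕ):ℝ)+1)) := by
      intro s₂ hs₂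
      obtain ⟨he0, heN₁, hesum⟩ := he_facts s₂ hs₂
      have hs₂m : s₂ < m := Finset.mem_range.1 hs₂
      have hm1 : 1 ≤ m := by omega
      have hcast : ((m-1-s₂ : ℕ):ℝ) = (m:ℝ) - 1 - (s₂:ℝ) := by
        push_cast [Nat.cast_sub (by omega : s₂ ≤ m - 1), Nat.cast_sub (by omega : 1 ≤ m)]
        ring
      set j : ℝ := ((m-1-s₂ : ℕ):ℝ) with hj_def
      have hj0 : 0 ≤ j := Nat.cast_nonneg _
      have hm1N : (m:ℝ) - 1 < N₂ := by
        have := hlt_all (m-1) (by omega)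
        rw [Nat.cast_sub (by omega : 1 ≤ m)] at this
        simpa using this
      have hjs : γ₂' * (j + (s₂:ℝ)) < (n:ℝ) := by
        have h1 : j + (s₂:ℝ) = (m:ℝ) - 1 := by rw [hcast]; ring
        nlinarith [mul_lt_mul_of_pos_left hm1N hγ₂']
      have hege : (γ₂'/γ₁') * j ≤ e s₂ := by
        rw [he_eq s₂]
        rw [div_mul_eq_mul_div, div_le_div_iff₀ hγ₁' hγ₁']
        nlinarith
      have hkey : c₂ * (j + 1) ≤ 1 + e s₂ := by
        have hc₂le : c₂ ≤ γ₂'/γ₁' := (le_div_iff₀ hγ₁').2 hc₂2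
        have h1 : c₂ * j ≤ (γ₂'/γ₁') * j := mul_le_mul_of_nonneg_right hc₂le hj0
        nlinarith
      have hj1 : 0 < c₂ * (j+1) := by positivity
      calc 1/Real.sqrt (1+e s₂) ≤ 1/Real.sqrt (c₂*(j+1)) := by
            apply one_div_le_one_div_of_le (Real.sqrt_pos.2 hj1)
            exact Real.sqrt_le_sqrt hkey
        _ = (1/Real.sqrt c₂) * (1/Real.sqrt (j+1)) := by
            rw [Real.sqrt_mul hc₂.le, one_div, mul_inv, ← one_div, ← one_div]
    calc ∑ s₂ ∈ Finset.range m, 1/Real.sqrt (1+e s₂)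
        ≤ ∑ s₂ ∈ Finset.range m, (1/Real.sqrt c₂) * (1/Real.sqrt (((m-1-s₂ : ℕ):ℝ)+1)) :=
          Finset.sum_le_sum hper
      _ = (1/Real.sqrt c₂) * ∑ s₂ ∈ Finset.range m, 1/Real.sqrt (((m-1-s₂ : ℕ):ℝ)+1) :=
          (Finset.mul_sum _ _ _).symm
      _ = (1/Real.sqrt c₂) * ∑ j ∈ Finset.range m, 1/Real.sqrt ((j:ℝ)+1) := by
          rw [Finset.sum_range_reflect (fun j => 1/Real.sqrt ((j:ℝ)+1)) m]
      _ ≤ (1/Real.sqrt c₂) * (2 * Real.sqrt m) :=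
          mul_le_mul_of_nonneg_left (sum_inv_sqrt_le m) (by positivity)
  -- size bounds
  have hAle : A ≤ Real.sqrt K * ((n:ℝ)+1) := by
    rw [hA_def]
    calc Real.sqrt (1+N₂) * Real.sqrt (1+N₁) = Real.sqrt ((1+N₂)*(1+N₁)) :=
          (Real.sqrt_mul (by linarith) _).symm
      _ ≤ Real.sqrt (K * (((n:ℝ)+1)*((n:ℝ)+1))) := by
          apply Real.sqrt_le_sqrt
          calc (1+N₂)*(1+N₁) ≤ ((1+1/γ₂') * ((n:ℝ)+1)) * ((1+1/γ₁') * ((n:ℝ)+1)) := by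
                apply mul_le_mul hN₂le hN₁le (by linarith) (by positivity)
            _ = K * (((n:ℝ)+1)*((n:ℝ)+1)) := by rw [hK_def]; ring
      _ = Real.sqrt K * ((n:ℝ)+1) := by
          rw [Real.sqrt_mul hK.le, Real.sqrt_mul_self (by linarith)]
  have hmle : Real.sqrt (m:ℝ) ≤ Real.sqrt K₂ * Real.sqrt ((n:ℝ)+1) := by
    rw [← Real.sqrt_mul hK₂.le]
    apply Real.sqrt_le_sqrt
    rw [hK₂_def]
    nlinarith
  -- final chain
  have hsK : 0 < Real.sqrt K := Real.sqrt_pos.2 hK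
  have hsK₂ : 0 < Real.sqrt K₂ := Real.sqrt_pos.2 hK₂
  have hsc : 0 < Real.sqrt c := Real.sqrt_pos.2 hc
  have hsc₂ : 0 < Real.sqrt c₂ := Real.sqrt_pos.2 hc₂
  have hsn1 : 0 < Real.sqrt ((n:ℝ)+1) := Real.sqrt_pos.2 (by linarith)
  calc ∑ s₂ ∈ Finset.range m,
        (v₂ ((2:ℝ) ^ (s₂:ℝ))) ^ θ * (v₁ ((2:ℝ) ^ (((n:ℝ) - s₂ * γ₂') / γ₁'))) ^ θ
      ≤ ∑ s₂ ∈ Finset.range m,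
          V * A * (D * (1/Real.sqrt (1+(s₂:ℝ)) + 1/Real.sqrt (1+e s₂))) :=
        Finset.sum_le_sum hterm
    _ = (V * A * D) * ∑ s₂ ∈ Finset.range m,
          (1/Real.sqrt (1+(s₂:ℝ)) + 1/Real.sqrt (1+e s₂)) := by
        rw [Finset.mul_sum]
        exact Finset.sum_congr rfl (fun _ _ => by ring)
    _ ≤ (V * A * D) * ((1 + 1/Real.sqrt c₂) * (2 * Real.sqrt m)) := by
        apply mul_le_mul_of_nonneg_left _ (mul_nonneg (mul_nonneg hV.le hA0) hD0)
        rw [Finset.sum_add_distrib]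
        calc (∑ s₂ ∈ Finset.range m, 1/Real.sqrt (1+(s₂:ℝ)))
              + ∑ s₂ ∈ Finset.range m, 1/Real.sqrt (1+e s₂)
            ≤ 2 * Real.sqrt m + (1/Real.sqrt c₂) * (2 * Real.sqrt m) := add_le_add hs1 hs2
          _ = (1 + 1/Real.sqrt c₂) * (2 * Real.sqrt m) := by ring
    _ ≤ (V * (Real.sqrt K * ((n:ℝ)+1)) * D) *
          ((1 + 1/Real.sqrt c₂) * (2 * (Real.sqrt K₂ * Real.sqrt ((n:ℝ)+1)))) := by
        gcongr
    _ = Real.sqrt K * ((1 + 1/Real.sqrt c₂) * (2 * Real.sqrt K₂)) / Real.sqrt c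
          * (v₁ ((2:ℝ) ^ N₁)) ^ θ * (v₂ ((2:ℝ) ^ N₂)) ^ θ * ((n:ℝ)+1) := by
        rw [hV_def, hD_def]
        field_simp
end

section
/- Let v₁, v₂ ∈ SVL[1,∞), α>0, θ ∈ [1,∞), and γ₁, γ₁', γ₂, γ₂' > 0 with δ := γ₂/γ₂' − γ₁/γ₁' > 0. Then there is C such that for all n ∈ ℕ, ∑_{0 ≤ s₂ < n/γ₂'} 2^{-s₂γ₂'δαθ} v₂(2^{s₂})^θ v₁(2^{(n−s₂γ₂')/γ₁'})^θ ≤ C v₁(2^{n/γ₁'})^θ. -/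
lemma one_add_le_two_mul_two_rpow {x : ℝ} (hx : 0 ≤ x) : 1 + x ≤ 2 * (2:ℝ) ^ x := by
  have h : Real.log 2 * x + 1 ≤ (2:ℝ) ^ x := by
    rw [Real.rpow_def_of_pos two_pos]
    exact Real.add_one_le_exp _
  nlinarith [Real.log_two_gt_d9]

namespace SVL

variable {v : ℝ → ℝ}

lemma pos (hv : SVL v) {t : ℝ} (ht : 1 ≤ t) : 0 < v t := hv.2.1 t ht

lemma exists_le_mul_rpow (hv : SVL v) {ε : ℝ} (hε : 0 < ε) :
    ∃ C > 0, ∀ t ≥ 1, v t ≤ C * t ^ ε := by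
  obtain ⟨C, hC, h⟩ := hv.2.2.1 ε hε
  refine ⟨C * v 1, mul_pos hC (hv.pos le_rfl), fun t ht => ?_⟩
  have h1 := h t 1 le_rfl ht
  rwa [Real.one_rpow, mul_one, Real.rpow_neg (by linarith), ← div_eq_mul_inv,
    div_le_iff₀ (by positivity)] at h1

lemma apply_two_rpow_le (hv : SVL v) {ε A B : ℝ} (hε : 0 < ε) (hB : 0 ≤ B) (hBA : B ≤ A) :
    v (2 ^ B) ≤ (2 * 2 ^ (A - B)) ^ ε * v (2 ^ A) := by
  have hlogb {x : ℝ} (hx : 0 ≤ x) : Real.logb 2 (2 * 2 ^ x) = 1 + x := by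
    rw [← Real.rpow_one_add' zero_le_two (by linarith), Real.logb_rpow two_pos (by norm_num)]
  have hmono : v (2 ^ B) * (1 + B) ^ ε ≤ v (2 ^ A) * (1 + A) ^ ε := by
    simpa only [hlogb hB, hlogb (hB.trans hBA)] using hv.2.2.2 ε hε
      (Set.mem_Ici.mpr (Real.one_le_rpow one_le_two hB))
      (Set.mem_Ici.mpr (Real.one_le_rpow one_le_two (hB.trans hBA)))
      (Real.rpow_le_rpow_of_exponent_le one_le_two hBA)
  -- `(1 + A) / (1 + B) ≤ 1 + (A - B)` since `B ≥ 0`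
  have hratio : (1 + A) / (1 + B) ≤ 2 * 2 ^ (A - B) := by
    refine le_trans ?_ (one_add_le_two_mul_two_rpow (sub_nonneg.mpr hBA))
    rw [div_le_iff₀ (by linarith)]
    nlinarith
  calc v (2 ^ B) ≤ ((1 + A) / (1 + B)) ^ ε * v (2 ^ A) := by
        rw [Real.div_rpow (by linarith) (by linarith), div_mul_eq_mul_div,
          le_div_iff₀ (Real.rpow_pos_of_pos (by linarith) _)]
        linarith
    _ ≤ (2 * 2 ^ (A - B)) ^ ε * v (2 ^ A) := by
        gcongr
        · exact (hv.pos (Real.one_le_rpow one_le_two (hB.trans hBA))).le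
        · exact div_nonneg (by linarith) (by linarith)

end SVL

lemma summand_le {v₁ v₂ : ℝ → ℝ} (h₁ : SVL v₁) (h₂ : SVL v₂) {ε C θ γ₁' γ₂' c s x : ℝ}
    (hε : 0 < ε) (hC : 0 ≤ C) (hv₂ : ∀ t ≥ 1, v₂ t ≤ C * t ^ ε) (hθ : 0 ≤ θ)
    (hγ₁' : 0 < γ₁') (hγ₂' : 0 ≤ γ₂') (hs : 0 ≤ s) (hsx : s * γ₂' ≤ x) :
    (2:ℝ) ^ (-(s * c)) * v₂ (2 ^ s) ^ θ * v₁ (2 ^ ((x - s * γ₂') / γ₁')) ^ θ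
      ≤ C ^ θ * 2 ^ (ε * θ) * v₁ (2 ^ (x / γ₁')) ^ θ
        * 2 ^ ((ε * θ * (1 + γ₂' / γ₁') - c) * s) := by
  have hB : 0 ≤ (x - s * γ₂') / γ₁' := div_nonneg (by linarith) hγ₁'.le
  have hv₂s : v₂ (2 ^ s) ^ θ ≤ C ^ θ * 2 ^ (ε * θ * s) := by
    calc v₂ (2 ^ s) ^ θ ≤ (C * (2 ^ s) ^ ε) ^ θ := by
          gcongr
          · exact (h₂.pos (Real.one_le_rpow one_le_two hs)).le
          · exact hv₂ _ (Real.one_le_rpow one_le_two hs)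
      _ = C ^ θ * 2 ^ (ε * θ * s) := by
          rw [Real.mul_rpow hC (by positivity), ← Real.rpow_mul zero_le_two,
            ← Real.rpow_mul zero_le_two]
          ring_nf
  have hv₁s : v₁ (2 ^ ((x - s * γ₂') / γ₁')) ^ θ
      ≤ 2 ^ (ε * θ) * 2 ^ (ε * θ * (γ₂' / γ₁' * s)) * v₁ (2 ^ (x / γ₁')) ^ θ := by
    have hBA : (x - s * γ₂') / γ₁' ≤ x / γ₁' := by gcongr; nlinarith
    calc v₁ (2 ^ ((x - s * γ₂') / γ₁')) ^ θ
        ≤ ((2 * 2 ^ (x / γ₁' - (x - s * γ₂') / γ₁')) ^ ε * v₁ (2 ^ (x / γ₁'))) ^ θ := by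
          gcongr
          · exact (h₁.pos (Real.one_le_rpow one_le_two hB)).le
          · exact h₁.apply_two_rpow_le hε hB hBA
      _ = 2 ^ (ε * θ) * 2 ^ (ε * θ * (γ₂' / γ₁' * s)) * v₁ (2 ^ (x / γ₁')) ^ θ := by
          have hv : 0 ≤ v₁ (2 ^ (x / γ₁')) :=
            (h₁.pos (Real.one_le_rpow one_le_two (hB.trans hBA))).le
          rw [Real.mul_rpow (by positivity) hv, Real.mul_rpow zero_le_two (by positivity),
            Real.mul_rpow (by positivity) (by positivity), ← Real.rpow_mul zero_le_two,
            ← Real.rpow_mul zero_le_two, ← Real.rpow_mul zero_le_two,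
            show (x / γ₁' - (x - s * γ₂') / γ₁') * ε * θ = ε * θ * (γ₂' / γ₁' * s) by
              field_simp; ring]
  calc (2:ℝ) ^ (-(s * c)) * v₂ (2 ^ s) ^ θ * v₁ (2 ^ ((x - s * γ₂') / γ₁')) ^ θ
      ≤ 2 ^ (-(s * c)) * (C ^ θ * 2 ^ (ε * θ * s))
        * (2 ^ (ε * θ) * 2 ^ (ε * θ * (γ₂' / γ₁' * s)) * v₁ (2 ^ (x / γ₁')) ^ θ) := by
        have hv₁ : 0 ≤ v₁ (2 ^ ((x - s * γ₂') / γ₁')) ^ θ :=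
          Real.rpow_nonneg (h₁.pos (Real.one_le_rpow one_le_two hB)).le θ
        gcongr
    _ = C ^ θ * 2 ^ (ε * θ) * v₁ (2 ^ (x / γ₁')) ^ θ
        * 2 ^ ((ε * θ * (1 + γ₂' / γ₁') - c) * s) := by
        rw [show (ε * θ * (1 + γ₂' / γ₁') - c) * s
            = -(s * c) + ε * θ * s + ε * θ * (γ₂' / γ₁' * s) by ring,
          Real.rpow_add two_pos, Real.rpow_add two_pos]
        ring

theorem stmt6_general (v₁ v₂ : ℝ → ℝ) (h₁ : SVL v₁) (h₂ : SVL v₂)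
    (α θ γ₁ γ₁' γ₂ γ₂' : ℝ) (hα : 0 < α) (hθ : 1 ≤ θ)
    (hγ₁' : 0 < γ₁') (hγ₂' : 0 < γ₂')
    (hδ : 0 < γ₂ / γ₂' - γ₁ / γ₁') :
    ∃ C > (0:ℝ), ∀ n : ℕ,
      ∑ s₂ ∈ Finset.range ⌈(n:ℝ) / γ₂'⌉₊,
          (2:ℝ) ^ (-(s₂:ℝ) * γ₂' * (γ₂ / γ₂' - γ₁ / γ₁') * α * θ)
            * (v₂ ((2:ℝ) ^ (s₂:ℝ))) ^ θ
            * (v₁ ((2:ℝ) ^ (((n:ℝ) - s₂ * γ₂') / γ₁'))) ^ θ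
        ≤ C * (v₁ ((2:ℝ) ^ ((n:ℝ) / γ₁'))) ^ θ := by
  have hθ0 : 0 < θ := by linarith
  set δ := γ₂ / γ₂' - γ₁ / γ₁'
  set c := γ₂' * δ * α * θ
  have hc : 0 < c := by positivity
  set ε := c / (2 * θ * (1 + γ₂' / γ₁'))
  have hε : 0 < ε := by positivity
  have hεc : ε * θ * (1 + γ₂' / γ₁') - c = -(c / 2) := by
    simp only [ε]
    field_simp
    ring
  obtain ⟨C, hC, hv₂⟩ := h₂.exists_le_mul_rpow hε
  set r := (2:ℝ) ^ (-(c / 2))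
  have hr1 : r < 1 := Real.rpow_lt_one_of_one_lt_of_neg one_lt_two (by linarith)
  have hr0 : 0 < r := by positivity
  refine ⟨C ^ θ * 2 ^ (ε * θ) * (1 - r)⁻¹, by have := sub_pos.mpr hr1; positivity, fun n => ?_⟩
  calc _ ≤ ∑ s ∈ Finset.range ⌈(n:ℝ) / γ₂'⌉₊,
          C ^ θ * 2 ^ (ε * θ) * v₁ (2 ^ (n / γ₁')) ^ θ * r ^ s := by
        refine Finset.sum_le_sum fun s hs => ?_
        have hsn : s * γ₂' ≤ n :=
          ((lt_div_iff₀ hγ₂').mp (Nat.lt_ceil.mp (Finset.mem_range.mp hs))).le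
        rw [show -(s:ℝ) * γ₂' * δ * α * θ = -(s * c) by ring,
          ← Real.rpow_mul_natCast zero_le_two, ← hεc]
        exact summand_le h₁ h₂ hε hC.le hv₂ hθ0.le hγ₁' hγ₂'.le s.cast_nonneg hsn
    _ ≤ C ^ θ * 2 ^ (ε * θ) * v₁ (2 ^ (n / γ₁')) ^ θ * (1 - r)⁻¹ := by
        have hgeom : ∑ s ∈ Finset.range ⌈(n:ℝ) / γ₂'⌉₊, r ^ s ≤ (1 - r)⁻¹ := by
          simpa [← Finset.range_eq_Ico] using geom_sum_Ico_le_of_lt_one (m := 0) hr0.le hr1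
        have hv₁ := h₁.pos (Real.one_le_rpow one_le_two (by positivity : 0 ≤ (n:ℝ) / γ₁'))
        rw [← Finset.mul_sum]
        gcongr
    _ = _ := by ring

/-- (Case `δ > 0`.) For `v₁, v₂ ∈ SVL`, `α > 0`, `θ ∈ [1,∞)`, `γⱼ, γⱼ' > 0` with
`δ := γ₂/γ₂' − γ₁/γ₁' > 0`, there is `C` such that for all `n`,
`∑_{0 ≤ s₂ < n/γ₂'} 2^{-s₂γ₂'δαθ} v₂(2^{s₂})^θ v₁(2^{(n−s₂γ₂')/γ₁'})^θ ≤ C v₁(2^{n/γ₁'})^θ`. -/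
theorem stmt6 (v₁ v₂ : ℝ → ℝ) (h₁ : SVL v₁) (h₂ : SVL v₂)
    (α θ γ₁ γ₁' γ₂ γ₂' : ℝ) (hα : 0 < α) (hθ : 1 ≤ θ)
    (hγ₁ : 0 < γ₁) (hγ₁' : 0 < γ₁') (hγ₂ : 0 < γ₂) (hγ₂' : 0 < γ₂')
    (hδ : 0 < γ₂ / γ₂' - γ₁ / γ₁') :
    ∃ C > (0:ℝ), ∀ n : ℕ,
      ∑ s₂ ∈ Finset.range ⌈(n:ℝ) / γ₂'⌉₊,
          (2:ℝ) ^ (-(s₂:ℝ) * γ₂' * (γ₂ / γ₂' - γ₁ / γ₁') * α * θ)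
            * (v₂ ((2:ℝ) ^ (s₂:ℝ))) ^ θ
            * (v₁ ((2:ℝ) ^ (((n:ℝ) - s₂ * γ₂') / γ₁'))) ^ θ
        ≤ C * (v₁ ((2:ℝ) ^ ((n:ℝ) / γ₁'))) ^ θ :=
  stmt6_general v₁ v₂ h₁ h₂ α θ γ₁ γ₁' γ₂ γ₂' hα hθ hγ₁' hγ₂' hδ
end
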